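/- arXiv:1807.08329 — 3 statements merged into one kernel-verified Lean document; each statement's English description precedes it below -/
import Mathlib

section
/- Let G be a finite solvable group and let N₁, …, N_r be normal subgroups of G with ⋂ᵢ Nᵢ = 1. Then for every natural number n, the index |G : F_n(G)| of the n-th Fitting subgroup divides (and in particular is at most) the product over i of the indices |(G/Nᵢ) : F_n(G/Nᵢ)|. -/
open Subgroup

/-- The Fitting subgroup: the join of all nilpotent normal subgroups. -/
def FittingSubgroup (G : Type*) [Group G] : Subgroup G :=
  sSup {N : Subgroup G | N.Normal ∧ Group.IsNilpotent ↥N}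

/-- The Fitting series `F_0 = ⊥`, `F_{n+1}/F_n = F(G/F_n)`.  (Each term is in fact
normal, so taking `normalCore` below does not change the subgroup.) -/
def FittingSeries (G : Type*) [Group G] : ℕ → Subgroup G
  | 0 => ⊥
  | n + 1 =>
      Subgroup.comap (QuotientGroup.mk' (FittingSeries G n).normalCore)
        (FittingSubgroup (G ⧸ (FittingSeries G n).normalCore))

/-- The Fitting length: the least `n` with `F_n(G) = G`. -/
noncomputable def fittingLength (G : Type*) [Group G] : ℕ :=
  sInf {n : ℕ | FittingSeries G n = ⊤}

/-!
Write `Fₙ` for the Fitting series and `Kₙ` for the intersection of the preimages of the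
`Fₙ(G/Nᵢ)`. By induction, `Kₙ ≤ Fₙ(G)`: the group `Kₙ₊₁` maps into the product of the nilpotent
groups `F((G/Nᵢ)/Fₙ(G/Nᵢ))` with kernel `Kₙ₊₁ ∩ Kₙ ≤ Fₙ(G)`, so its image in `G/Fₙ(G)` is a
nilpotent normal subgroup and lies in `F(G/Fₙ(G))`. The divisibility then holds because
`G/⋂ᵢ Mᵢ` embeds in `∏ᵢ G/Mᵢ` for normal `Mᵢ`.

That `F(Q)` is nilpotent for finite `Q` is Fitting's theorem: for nilpotent normal `H, K` and a
prime `p`, the normal Sylow `p`-subgroups of `H` and `K` generate a normal `p`-subgroup of `H ⊔ K`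
of index prime to `p`, which is then the unique Sylow `p`-subgroup of `H ⊔ K`.
-/

theorem Sylow.normal_of_isPGroup_of_not_dvd_index {G : Type*} [Group G] [Finite G] {p : ℕ}
    [Fact p.Prime] {A : Subgroup G} [A.Normal] (hA : IsPGroup p A) (hAi : ¬ p ∣ A.index)
    (P : Sylow p G) : (P : Subgroup G).Normal := by
  have hPA : (P : Subgroup G) = A :=
    (hA.toSylow hAi).is_maximal' P.isPGroup' (hA.le_sylow_of_normal P)
  exact hPA ▸ ‹A.Normal›

namespace Subgroup

variable {G : Type*} [Group G]

theorem index_iInf_dvd_prod_index {ι : Type*} [Fintype ι] (f : ι → Subgroup G)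
    [∀ i, (f i).Normal] : (⨅ i, f i).index ∣ ∏ i, (f i).index := by
  let φ : G →* ∀ i, G ⧸ f i := MonoidHom.pi fun i => QuotientGroup.mk' (f i)
  have hker : φ.ker = ⨅ i, f i := by
    ext x
    simp [φ, mem_iInf, funext_iff]
  calc (⨅ i, f i).index = Nat.card φ.range := by rw [← hker, index_ker]
    _ ∣ Nat.card (∀ i, G ⧸ f i) := card_subgroup_dvd_card _
    _ = ∏ i, (f i).index := Nat.card_pi

theorem relIndex_sup_dvd_relIndex {M A H : Subgroup G} [M.Normal] (hAM : A ≤ M) (hAH : A ≤ H) :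
    M.relIndex (M ⊔ H) ∣ A.relIndex H := by
  rw [relIndex_sup_left, ← inf_relIndex_right]
  exact relIndex_dvd_of_le_left _ (le_inf hAM hAH)

theorem exists_normal_isPGroup_le_not_dvd_relIndex [Finite G] (p : ℕ)
    [Fact p.Prime] (N : Subgroup G) [N.Normal] [Group.IsNilpotent N] :
    ∃ A : Subgroup G, A.Normal ∧ IsPGroup p A ∧ A ≤ N ∧ ¬ p ∣ A.relIndex N := by
  obtain ⟨P⟩ := (inferInstance : Nonempty (Sylow p N))
  have : (P : Subgroup N).Characteristic := Sylow.characteristic_of_normal P inferInstance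
  refine ⟨(P : Subgroup N).map N.subtype, inferInstance, P.isPGroup'.map _, map_subtype_le _, ?_⟩
  rw [relIndex, ← comap_subtype, comap_map_eq_self_of_injective N.subtype_injective]
  exact P.not_dvd_index

theorem isNilpotent_sup [Finite G] (H K : Subgroup G) [H.Normal] [K.Normal]
    [Group.IsNilpotent H] [Group.IsNilpotent K] : Group.IsNilpotent ↥(H ⊔ K) := by
  refine (Group.isNilpotent_of_finite_tfae.out 3 0).mp ?_
  intro p _ P
  obtain ⟨A, _, hAp, hAH, hA⟩ := exists_normal_isPGroup_le_not_dvd_relIndex p H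
  obtain ⟨B, _, hBp, hBK, hB⟩ := exists_normal_isPGroup_le_not_dvd_relIndex p K
  have hAB : A ⊔ B ≤ H ⊔ B := sup_le_sup_right hAH B
  have hHB : H ⊔ B ≤ H ⊔ K := sup_le_sup_left hBK H
  have hABH : (A ⊔ B).relIndex (H ⊔ B) ∣ A.relIndex H := by
    have e : A ⊔ B ⊔ H = H ⊔ B := by rw [sup_right_comm, sup_eq_right.mpr hAH]
    exact e ▸ relIndex_sup_dvd_relIndex le_sup_left hAH
  have hHBK : (H ⊔ B).relIndex (H ⊔ K) ∣ B.relIndex K := by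
    have e : H ⊔ B ⊔ K = H ⊔ K := by rw [sup_assoc, sup_eq_right.mpr hBK]
    exact e ▸ relIndex_sup_dvd_relIndex le_sup_right hBK
  have hindex : ¬ p ∣ (A ⊔ B).relIndex (H ⊔ K) := by
    rw [← relIndex_mul_relIndex _ _ _ hAB hHB, (Fact.out : p.Prime).dvd_mul]
    rintro (h | h)
    exacts [hA (h.trans hABH), hB (h.trans hHBK)]
  have hABp : IsPGroup p ((A ⊔ B).subgroupOf (H ⊔ K)) :=
    (hAp.to_sup_of_normal_right hBp).of_equiv (subgroupOfEquivOfLe (hAB.trans hHB)).symm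
  have : ((A ⊔ B).subgroupOf (H ⊔ K)).Normal := Normal.subgroupOf inferInstance _
  exact Sylow.normal_of_isPGroup_of_not_dvd_index hABp hindex P

end Subgroup

theorem MonoidHom.isNilpotent_range_of_ker_le {K A B : Type*} [Group K] [Group A] [Group B]
    (ψ : K →* A) (φ : K →* B) (h : ψ.ker ≤ φ.ker) [Group.IsNilpotent ψ.range] :
    Group.IsNilpotent φ.range := by
  have : Group.IsNilpotent (K ⧸ ψ.ker) :=
    Group.nilpotent_of_mulEquiv (QuotientGroup.quotientKerEquivRange ψ).symm
  have : Group.IsNilpotent (K ⧸ φ.ker) :=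
    Group.nilpotent_of_surjective _ <| QuotientGroup.map_surjective_of_surjective _ _
      (MonoidHom.id K) QuotientGroup.mk_surjective h
  exact Group.nilpotent_of_mulEquiv (QuotientGroup.quotientKerEquivRange φ)

section Fitting

variable {G : Type*} [Group G]

variable (G) in
theorem fittingSubgroup_normal : (FittingSubgroup G).Normal :=
  sSup_normal _ fun _ hN => hN.1

theorem le_fittingSubgroup {N : Subgroup G} [N.Normal] [Group.IsNilpotent N] :
    N ≤ FittingSubgroup G :=
  le_sSup ⟨‹_›, ‹_›⟩

variable (G) in
theorem isNilpotent_fittingSubgroup [Finite G] : Group.IsNilpotent (FittingSubgroup G) := by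
  have : Finite (Subgroup G) := Finite.of_injective _ (SetLike.coe_injective (A := Subgroup G))
  have hsup : SupClosed {N : Subgroup G | N.Normal ∧ Group.IsNilpotent N} := by
    rintro H ⟨_, _⟩ K ⟨_, _⟩
    exact ⟨inferInstance, isNilpotent_sup H K⟩
  exact (hsup.sSup_mem (Set.toFinite _) ⟨inferInstance, inferInstance⟩ le_rfl).2

variable (G) in
theorem fittingSeries_normal : ∀ n, (FittingSeries G n).Normal
  | 0 => inferInstanceAs (⊥ : Subgroup G).Normal
  | _ + 1 => (fittingSubgroup_normal _).comap _

end Fitting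

theorem iInf_comap_fittingSubgroup_le {G : Type*} [Group G] {ι : Type*} [Finite ι]
    {Q : ι → Type*} [∀ i, Group (Q i)] [∀ i, Finite (Q i)] (g : ∀ i, G →* Q i)
    (X : Subgroup G) [X.Normal] (hX : ⨅ i, (g i).ker ≤ X) :
    ⨅ i, (FittingSubgroup (Q i)).comap (g i) ≤
      (FittingSubgroup (G ⧸ X)).comap (QuotientGroup.mk' X) := by
  set K := ⨅ i, (FittingSubgroup (Q i)).comap (g i)
  have : K.Normal := normal_iInf_normal fun i => (fittingSubgroup_normal _).comap _
  have := fun i => isNilpotent_fittingSubgroup (Q i)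
  let ψ : K →* ∀ i, FittingSubgroup (Q i) := MonoidHom.pi fun i =>
    ((g i).comp K.subtype).codRestrict _ fun x => mem_iInf.mp x.2 i
  let φ : K →* G ⧸ X := (QuotientGroup.mk' X).comp K.subtype
  have hker : ψ.ker ≤ φ.ker := fun x hx => by
    have hx' : ∀ i, g i x = 1 := fun i => congrArg Subtype.val (congrFun hx i)
    simpa [φ] using hX (mem_iInf.mpr hx')
  have : Group.IsNilpotent (K.map (QuotientGroup.mk' X)) := by
    rw [← range_subtype K, ← MonoidHom.range_comp]
    exact ψ.isNilpotent_range_of_ker_le φ hker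
  have : (K.map (QuotientGroup.mk' X)).Normal := Normal.map ‹_› _ (QuotientGroup.mk'_surjective X)
  exact map_le_iff_le_comap.mp le_fittingSubgroup

theorem iInf_comap_fittingSeries_le {G : Type*} [Group G] {ι : Type*} [Finite ι]
    {H : ι → Type*} [∀ i, Group (H i)] [∀ i, Finite (H i)] (f : ∀ i, G →* H i)
    (hf : ⨅ i, (f i).ker = ⊥) :
    ∀ n, ⨅ i, (FittingSeries (H i) n).comap (f i) ≤ FittingSeries G n
  | 0 => by simp [FittingSeries, MonoidHom.comap_bot, hf]
  | n + 1 => by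
    have := fun i => fittingSeries_normal (H i) n
    have := fittingSeries_normal G n
    refine iInf_comap_fittingSubgroup_le
      (fun i => (QuotientGroup.mk' (FittingSeries (H i) n).normalCore).comp (f i)) _ ?_
    simpa [← MonoidHom.comap_ker, normalCore_eq_self] using iInf_comap_fittingSeries_le f hf n

theorem fitting_index_dvd_prod_of_iInf_eq_bot_general (G : Type*) [Group G] [Finite G]
    {r : ℕ} (N : Fin r → Subgroup G)
    (hint : (⨅ i, N i) = ⊥) (n : ℕ) :
    (FittingSeries G n).index ∣
        ∏ i, (FittingSeries (G ⧸ (N i).normalCore) n).index ∧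
      (FittingSeries G n).index ≤
        ∏ i, (FittingSeries (G ⧸ (N i).normalCore) n).index := by
  have hker : ⨅ i, (QuotientGroup.mk' (N i).normalCore).ker = ⊥ := by
    simp only [QuotientGroup.ker_mk']
    rw [eq_bot_iff, ← hint]
    exact iInf_mono fun i => normalCore_le (N i)
  have := fun i => fittingSeries_normal (G ⧸ (N i).normalCore) n
  have hdvd : (FittingSeries G n).index ∣ ∏ i, (FittingSeries (G ⧸ (N i).normalCore) n).index :=
    calc (FittingSeries G n).index
        ∣ (⨅ i, (FittingSeries (G ⧸ (N i).normalCore) n).comap (QuotientGroup.mk' _)).index :=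
          index_dvd_of_le (iInf_comap_fittingSeries_le _ hker n)
      _ ∣ ∏ i, ((FittingSeries (G ⧸ (N i).normalCore) n).comap (QuotientGroup.mk' _)).index :=
          index_iInf_dvd_prod_index _
      _ = ∏ i, (FittingSeries (G ⧸ (N i).normalCore) n).index := by
          simp only [index_comap_of_surjective _ (QuotientGroup.mk'_surjective _)]
  exact ⟨hdvd, Nat.le_of_dvd (Finset.prod_pos fun i _ => Nat.pos_of_ne_zero
    index_ne_zero_of_finite) hdvd⟩

/-- If `N₁, …, N_r` are normal subgroups of the finite solvable group `G` with trivial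
intersection, then `|G : F_n(G)|` divides (hence is at most) `∏ᵢ |(G/Nᵢ) : F_n(G/Nᵢ)|`. -/
theorem fitting_index_dvd_prod_of_iInf_eq_bot (G : Type*) [Group G] [Finite G] [Group.IsSolvable G]
    {r : ℕ} (N : Fin r → Subgroup G) (hnorm : ∀ i, (N i).Normal)
    (hint : (⨅ i, N i) = ⊥) (n : ℕ) :
    (FittingSeries G n).index ∣
        ∏ i, (FittingSeries (G ⧸ (N i).normalCore) n).index ∧
      (FittingSeries G n).index ≤
        ∏ i, (FittingSeries (G ⧸ (N i).normalCore) n).index :=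
  fitting_index_dvd_prod_of_iInf_eq_bot_general G N hint n
end

section
/- Let A = FH be a Frobenius group with kernel F and complement H acting coprimely by automorphisms on a finite solvable group G. If C_G(H) = 1, then [G, F] = 1, and consequently |G| = |C_G(F)|. -/
/-- Fixed points of a subgroup `S ≤ A` under an action of `A` on `G` by automorphisms. -/
def fixedSubgroup (A : Type*) [Group A] {G : Type*} [Group G] [MulDistribMulAction A G]
    (S : Subgroup A) : Subgroup G where
  carrier := {g | ∀ a ∈ S, a • g = g}
  one_mem' := fun a _ => smul_one a
  mul_mem' := fun {x y} hx hy a ha => by rw [smul_mul', hx a ha, hy a ha]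
  inv_mem' := fun {x} hx a ha => by rw [smul_inv', hx a ha]

/-- `A` is a Frobenius group with kernel `F` and complement `H`:
`A = F ⋊ H` and `C_F(h) = 1` for every nontrivial `h ∈ H`. -/
def IsFrobeniusGroupWith (A : Type*) [Group A] (F H : Subgroup A) : Prop :=
  F.Normal ∧ F ≠ ⊥ ∧ H ≠ ⊥ ∧ F ⊓ H = ⊥ ∧ F ⊔ H = ⊤ ∧
    ∀ h ∈ H, h ≠ 1 → ∀ f ∈ F, h * f * h⁻¹ = f → f = 1

/-!
Induct on `|G|`. The last nontrivial term `N` of the derived series of `G` is abelian and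
characteristic, hence `A`-invariant. Since `|H|` is prime to `|N|`, every crossed homomorphism
`H → N` is principal, so `H`-fixed points of `G/N` lift to `G` and `C_{G/N}(H) = 1`; by
induction `F` acts trivially on `G/N`. On the abelian group `N`, multiply the relations
`N_H(v) = 1` over the `F`-conjugates of `H`: for `h ≠ 1` the map `x ↦ x h x⁻¹ h⁻¹` permutes `F`,
so `w ^ |F|` becomes a product of `F`-norms, which are `F`-fixed; as `|F|` is prime to `|N|`,
`F` fixes `N`. Finally an element `a ∈ F` trivial on `N` and on `G/N` sends `g` to `g n` with
`n ∈ N` fixed by `a`, so `a ^ t • g = g n ^ t`, and the order of `n` divides both `orderOf a`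
and `|N|`.
-/

open Finset

section Characteristic

variable {A G : Type*} [Group A] [Group G] [MulDistribMulAction A G]
  (N : Subgroup G) [N.Characteristic]

theorem Subgroup.smul_mem_of_characteristic (a : A) {g : G} (hg : g ∈ N) : a • g ∈ N :=
  Subgroup.characteristic_iff_le_comap.mp ‹_› (MulDistribMulAction.toMulEquiv G a) hg

instance Subgroup.mulDistribMulActionOfCharacteristic : MulDistribMulAction A N :=
  letI : SMul A N := ⟨fun a n => ⟨a • (n : G), N.smul_mem_of_characteristic a n.2⟩⟩
  Subtype.coe_injective.mulDistribMulAction N.subtype fun _ _ => rfl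

instance QuotientGroup.mulDistribMulActionOfCharacteristic : MulDistribMulAction A (G ⧸ N) :=
  letI : SMul A (G ⧸ N) := ⟨fun a => QuotientGroup.map N N (MulDistribMulAction.toMonoidHom G a)
    fun _ => N.smul_mem_of_characteristic a⟩
  QuotientGroup.mk_surjective.mulDistribMulAction (QuotientGroup.mk' N) fun _ _ => rfl

@[simp]
theorem Subgroup.coe_smul_of_characteristic (a : A) (n : N) : ((a • n : N) : G) = a • (n : G) :=
  rfl

theorem fixedSubgroup_subgroup_eq_subgroupOf (S : Subgroup A) :
    fixedSubgroup A (G := N) S = (fixedSubgroup A S).subgroupOf N := by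
  ext n
  simp only [fixedSubgroup, Subgroup.mem_subgroupOf, Subgroup.mem_mk, Submonoid.mem_mk,
    Subsemigroup.mem_mk, Set.mem_ofPred_eq, Subtype.ext_iff]
  rfl

end Characteristic

theorem exists_smul_eq_inv_mul_of_coprime {K W : Type*} [Group K] [Finite K] [CommGroup W]
    [MulDistribMulAction K W] (hcop : (Nat.card K).Coprime (Nat.card W)) (c : K → W)
    (hc : ∀ k₀ k₁, c (k₀ * k₁) = c k₀ * k₀ • c k₁) :
    ∃ m : W, ∀ k, k • m = (c k)⁻¹ * m := by
  have := Fintype.ofFinite K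
  -- `m` is an `|K|`-th root of `∏ k, c k`
  obtain ⟨m, hm⟩ := (Nat.Coprime.pow_left_bijective hcop.symm).2 (∏ k, c k)
  refine ⟨m, fun k₀ => (Nat.Coprime.pow_left_bijective hcop.symm).1 ?_⟩
  have hprod : ∏ k, c k = c k₀ ^ Nat.card K * k₀ • ∏ k, c k := calc
    ∏ k, c k = ∏ k, c (k₀ * k) := (Equiv.prod_comp (Equiv.mulLeft k₀) c).symm
    _ = c k₀ ^ Nat.card K * k₀ • ∏ k, c k := by
      simp only [hc, prod_mul_distrib, prod_const, card_univ, smul_prod', Nat.card_eq_fintype_card]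
  simp only at hm ⊢
  rw [← smul_pow', hm, mul_pow, hm, inv_pow, eq_inv_mul_iff_mul_eq, ← hprod]

section Quotient

variable {A G : Type*} [Group A] [Group G] [MulDistribMulAction A G]
  (N : Subgroup G) [N.Characteristic] [IsMulCommutative N]

open scoped IsMulCommutative in
theorem fixedSubgroup_quotient_le_map (S : Subgroup A) [Finite S]
    (hcop : (Nat.card S).Coprime (Nat.card N)) :
    fixedSubgroup A (G := G ⧸ N) S ≤ (fixedSubgroup A S).map (QuotientGroup.mk' N) := by
  intro q hq
  obtain ⟨g, rfl⟩ := QuotientGroup.mk_surjective q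
  have hgN (s : S) : g⁻¹ * ((s : A) • g) ∈ N := QuotientGroup.eq.mp (hq s s.2).symm
  let c : S → N := fun s => ⟨_, hgN s⟩
  have hc (s₀ s₁ : S) : c (s₀ * s₁) = c s₀ * s₀ • c s₁ := by
    ext
    simp [c, Subgroup.smul_def, mul_smul, mul_assoc]
  obtain ⟨m, hm⟩ := exists_smul_eq_inv_mul_of_coprime hcop c hc
  refine ⟨g * m, fun a ha => ?_, by simp⟩
  have hma : a • (m : G) = (g⁻¹ * (a • g))⁻¹ * m := congrArg Subtype.val (hm ⟨a, ha⟩)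
  rw [smul_mul', hma]
  group

theorem fixedSubgroup_quotient_eq_bot (S : Subgroup A) [Finite S]
    (hcop : (Nat.card S).Coprime (Nat.card N)) (hS : fixedSubgroup A (G := G) S = ⊥) :
    fixedSubgroup A (G := G ⧸ N) S = ⊥ :=
  eq_bot_mono (fixedSubgroup_quotient_le_map N S hcop) (by rw [hS, Subgroup.map_bot])

end Quotient

section Extension

variable {A G : Type*} [Group A] [Group G] [MulDistribMulAction A G]

theorem smul_eq_self_of_inv_mul_smul_mem (N : Subgroup G) {a : A}
    (hcop : (orderOf a).Coprime (Nat.card N)) (hN : ∀ n ∈ N, a • n = n) {g : G}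
    (hg : g⁻¹ * (a • g) ∈ N) : a • g = g := by
  set n := g⁻¹ * (a • g)
  have hag : a • g = g * n := (mul_inv_cancel_left g _).symm
  have hpow (t : ℕ) : a ^ t • g = g * n ^ t := by
    induction t with
    | zero => simp
    | succ t ih => rw [pow_succ', mul_smul, ih, smul_mul', smul_pow', hN n hg, hag, mul_assoc,
        ← pow_succ']
  have hn : n ^ orderOf a = 1 := by simpa [pow_orderOf_eq_one] using (hpow (orderOf a)).symm
  have hord : orderOf n = 1 :=
    Nat.eq_one_of_dvd_coprimes hcop (orderOf_dvd_of_pow_eq_one hn) (N.orderOf_dvd_natCard hg)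
  rw [hag, orderOf_eq_one_iff.mp hord, mul_one]

theorem fixedSubgroup_eq_top_of_subgroup_of_quotient (S : Subgroup A) (N : Subgroup G)
    [N.Characteristic] (hcop : (Nat.card S).Coprime (Nat.card N))
    (hN : fixedSubgroup A (G := N) S = ⊤)
    (hQ : fixedSubgroup A (G := G ⧸ N) S = ⊤) : fixedSubgroup A (G := G) S = ⊤ := by
  refine (Subgroup.eq_top_iff' _).mpr fun g a ha => ?_
  refine smul_eq_self_of_inv_mul_smul_mem N
    (hcop.coprime_dvd_left (S.orderOf_dvd_natCard ha)) (fun n hn => ?_) ?_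
  · exact congrArg Subtype.val ((hN ▸ Subgroup.mem_top (⟨n, hn⟩ : N)) a ha)
  · exact QuotientGroup.eq.mp ((hQ ▸ Subgroup.mem_top (g : G ⧸ N)) a ha).symm

end Extension

theorem exists_derivedSeries_ne_bot_and_succ_eq_bot (G : Type*) [Group G] [Nontrivial G]
    [Group.IsSolvable G] : ∃ i, derivedSeries G i ≠ ⊥ ∧ derivedSeries G (i + 1) = ⊥ := by
  classical
  have hsolv : ∃ n, derivedSeries G n = ⊥ := Group.IsSolvable.solvable
  have hpos : Nat.find hsolv ≠ 0 := fun h0 => by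
    simpa [h0] using Nat.find_spec hsolv
  refine ⟨Nat.find hsolv - 1, Nat.find_min hsolv (by omega), ?_⟩
  rw [Nat.sub_add_cancel (by omega)]
  exact Nat.find_spec hsolv

theorem isMulCommutative_derivedSeries_of_succ_eq_bot {G : Type*} [Group G] {i : ℕ}
    (h : derivedSeries G (i + 1) = ⊥) : IsMulCommutative (derivedSeries G i) :=
  Subgroup.le_centralizer_iff_isMulCommutative.mp <|
    Subgroup.commutator_eq_bot_iff_le_centralizer.mp <| (derivedSeries_succ G i).symm.trans h

noncomputable def actionNorm {A W : Type*} [Group A] [CommGroup W] [MulDistribMulAction A W]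
    (S : Subgroup A) [Fintype S] (w : W) : W :=
  ∏ s : S, (s : A) • w

theorem actionNorm_mem_fixedSubgroup {A W : Type*} [Group A] [CommGroup W]
    [MulDistribMulAction A W] (S : Subgroup A) [Fintype S] (w : W) :
    actionNorm S w ∈ fixedSubgroup A S := fun a ha => by
  rw [actionNorm, smul_prod']
  simp_rw [smul_smul]
  exact Equiv.prod_comp (Equiv.mulLeft (⟨a, ha⟩ : S)) (fun s : S => (s : A) • w)

namespace Frobenius

variable {A : Type*} [Group A] {F H : Subgroup A}
  (hfrob : ∀ h ∈ H, h ≠ 1 → ∀ f ∈ F, h * f * h⁻¹ = f → f = 1)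
include hfrob

theorem eq_of_conj_eq_conj {h : A} (hh : h ∈ H) (h1 : h ≠ 1) {x y : A} (hx : x ∈ F)
    (hy : y ∈ F) (hxy : x * h * x⁻¹ = y * h * y⁻¹) : x = y := by
  have hz : h * (y⁻¹ * x) * h⁻¹ = y⁻¹ * x := calc
    h * (y⁻¹ * x) * h⁻¹ = y⁻¹ * (y * h * y⁻¹) * x * h⁻¹ := by group
    _ = y⁻¹ * (x * h * x⁻¹) * x * h⁻¹ := by rw [hxy]
    _ = y⁻¹ * x := by group
  simpa [inv_mul_eq_one, eq_comm] using hfrob h hh h1 _ (F.mul_mem (F.inv_mem hy) hx) hz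

theorem prod_conj_smul_eq_actionNorm (hF : F.Normal) [Fintype F] {W : Type*} [CommGroup W]
    [MulDistribMulAction A W] {h : A} (hh : h ∈ H) (h1 : h ≠ 1) (w : W) :
    ∏ x : F, ((x : A) * h * (x : A)⁻¹) • w = actionNorm F (h • w) := by
  let φ : F → F := fun x =>
    ⟨x * (h * (x : A)⁻¹ * h⁻¹), F.mul_mem x.2 (hF.conj_mem _ (F.inv_mem x.2) h)⟩
  have hφ : Function.Injective φ := fun x y hxy => Subtype.ext <|
    eq_of_conj_eq_conj hfrob hh h1 x.2 y.2 <| by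
      simpa [φ, mul_assoc] using congrArg (· * h) (congrArg Subtype.val hxy)
  refine Fintype.prod_bijective φ (Finite.injective_iff_bijective.mp hφ) _ _ fun x => ?_
  rw [smul_smul]
  exact congrArg (· • w) (by simp only [φ]; group)

theorem fixedSubgroup_eq_top_of_commGroup (hF : F.Normal) [Finite F] [Finite H] {W : Type*}
    [CommGroup W] [MulDistribMulAction A W] (hcop : (Nat.card F).Coprime (Nat.card W))
    (hH : fixedSubgroup A (G := W) H = ⊥) : fixedSubgroup A (G := W) F = ⊤ := by
  classical
  have := Fintype.ofFinite F
  have := Fintype.ofFinite H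
  have hnormH (v : W) : actionNorm H v = 1 := by
    simpa [hH] using actionNorm_mem_fixedSubgroup H v
  have hrel (w : W) :
      w ^ Nat.card F * ∏ h ∈ univ.erase (1 : H), actionNorm F ((h : A) • w) = 1 := calc
    _ = ∏ h : H, ∏ x : F, ((x : A) * h * (x : A)⁻¹) • w := by
      rw [← mul_prod_erase univ _ (mem_univ 1)]
      congr 1
      · simp [Nat.card_eq_fintype_card]
      · refine prod_congr rfl fun h hh => ?_
        exact (prod_conj_smul_eq_actionNorm hfrob hF h.2 (by simpa using hh) w).symm
    _ = ∏ x : F, (x : A) • actionNorm H ((x : A)⁻¹ • w) := by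
      rw [prod_comm]
      simp only [actionNorm, smul_prod', smul_smul, mul_assoc]
    _ = 1 := by simp [hnormH]
  refine (Subgroup.eq_top_iff' _).mpr fun w => ?_
  obtain ⟨v, rfl⟩ := (Nat.Coprime.pow_left_bijective hcop.symm).2 w
  beta_reduce
  rw [eq_inv_of_mul_eq_one_left (hrel v)]
  exact inv_mem (prod_mem fun h _ => actionNorm_mem_fixedSubgroup F _)

theorem fixedSubgroup_eq_top_of_isSolvable [Finite A] (hF : F.Normal) (G : Type*) [Group G]
    [Finite G] [Group.IsSolvable G] [MulDistribMulAction A G]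
    (hcop : (Nat.card A).Coprime (Nat.card G)) (hH : fixedSubgroup A (G := G) H = ⊥) :
    fixedSubgroup A (G := G) F = ⊤ := by
  induction hn : Nat.card G using Nat.strong_induction_on generalizing G with
  | _ n ih =>
  rcases subsingleton_or_nontrivial G with hG | hG
  · exact Subsingleton.elim _ _
  obtain ⟨i, hne, hsucc⟩ := exists_derivedSeries_ne_bot_and_succ_eq_bot G
  set N := derivedSeries G i
  have := isMulCommutative_derivedSeries_of_succ_eq_bot hsucc
  have hcopN {S : Subgroup A} : (Nat.card S).Coprime (Nat.card N) :=
    (hcop.coprime_dvd_left S.card_subgroup_dvd_card).coprime_dvd_right N.card_subgroup_dvd_card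
  refine fixedSubgroup_eq_top_of_subgroup_of_quotient F N hcopN ?_ ?_
  · open scoped IsMulCommutative in
    exact fixedSubgroup_eq_top_of_commGroup hfrob hF hcopN
      (by rw [fixedSubgroup_subgroup_eq_subgroupOf, hH, Subgroup.bot_subgroupOf])
  · refine ih _ ?_ (G ⧸ N) (hcop.coprime_dvd_right N.card_quotient_dvd_card)
      (fixedSubgroup_quotient_eq_bot N H hcopN hH) rfl
    rw [← hn, N.card_eq_card_quotient_mul_card_subgroup]
    exact lt_mul_of_one_lt_right Nat.card_pos ((N.one_lt_card_iff_ne_bot).mpr hne)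

end Frobenius

/-- If the Frobenius group `A = FH` acts coprimely on the finite solvable group `G`
with `C_G(H) = 1`, then `[G, F] = 1` (i.e. `F` acts trivially), so `|G| = |C_G(F)|`. -/
theorem kernel_acts_trivially_of_fixedH_trivial
    (A : Type*) [Group A] [Finite A] (F H : Subgroup A) (hA : IsFrobeniusGroupWith A F H)
    (G : Type*) [Group G] [Finite G] [Group.IsSolvable G] [MulDistribMulAction A G]
    (hcop : Nat.Coprime (Nat.card A) (Nat.card G))
    (hCH : fixedSubgroup A (G := G) H = ⊥) :
    fixedSubgroup A (G := G) F = ⊤ ∧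
      Nat.card G = Nat.card ↥(fixedSubgroup A (G := G) F) := by
  obtain ⟨hF, -, -, -, -, hfrob⟩ := hA
  have hfix := Frobenius.fixedSubgroup_eq_top_of_isSolvable hfrob hF G hcop hCH
  exact ⟨hfix, by rw [hfix, Subgroup.card_top]⟩
end

section
/- Let G be a finite solvable group with an F-chain P₁, …, P_n of length n equal to the Fitting length f(G) = n, where P_n = C_n (so D_n = 1). Then C_n ≤ F(G). -/
open Subgroup
open scoped commutatorElement

/-- An `𝓕`-chain of length `ℓ` in `G`: sections `P i = C i / D i` with each `P i` a
nontrivial statement-free `p i`-group, consecutive primes distinct, the last `D`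
trivial, `D i` centralizing the next section, and `[P i, P (i+1)] = P (i+1)`. -/
structure IsFChain (G : Type*) [Group G] (ℓ : ℕ) (p : Fin ℓ → ℕ)
    (C D : Fin ℓ → Subgroup G) : Prop where
  le : ∀ i, D i ≤ C i
  normal : ∀ i, ((D i).subgroupOf (C i)).Normal
  prime : ∀ i, (p i).Prime
  pgroup : ∀ i, IsPGroup (p i) (↥(C i) ⧸ (D i).subgroupOf (C i))
  p_ne : ∀ i : Fin ℓ, (h : i.1 + 1 < ℓ) → p i ≠ p ⟨i.1 + 1, h⟩
  d_last : ∀ h : 0 < ℓ, D ⟨ℓ - 1, by omega⟩ = ⊥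
  norm_next : ∀ i : Fin ℓ, (h : i.1 + 1 < ℓ) →
    C i ≤ Subgroup.normalizer (C ⟨i.1 + 1, h⟩ : Set G) ∧ C i ≤ Subgroup.normalizer (D ⟨i.1 + 1, h⟩ : Set G)
  cent_next : ∀ i : Fin ℓ, (h : i.1 + 1 < ℓ) →
    ∀ d ∈ D i, ∀ c ∈ C ⟨i.1 + 1, h⟩, ⁅d, c⁆ ∈ D ⟨i.1 + 1, h⟩
  comm_next : ∀ i : Fin ℓ, (h : i.1 + 1 < ℓ) →
    ⁅C i, C ⟨i.1 + 1, h⟩⁆ ⊔ D ⟨i.1 + 1, h⟩ = C ⟨i.1 + 1, h⟩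

/-!
Write `F_k` for the Fitting series. Going down the chain one shows `C_i ≤ D_i F_{n-i+1}`. For the
step, pass to `G / F_k`, where `C_i ≤ D_i F` with `F` the Fitting subgroup. The image of `F` in
`G / O_p` is a `p'`-group (it is generated by images of nilpotent normal subgroups, whose Sylow
`p`-subgroups lie in `O_p`), so every `f ∈ F` is `u w` with `u ∈ O_p` and `w` a `p'`-element, both
powers of `f`. Now `u` acts trivially on the `q`-section `C_{i+1}/D_{i+1}`, since `[u, C_{i+1}]` is a
`p`-group; and for `x = e u w ∈ C_i` with `e ∈ D_i`, `w` agrees with the `p`-element `x` modulo the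
kernel of the action, so it acts trivially as well. Hence `[C_i, C_{i+1}] ≤ D_{i+1}`, and
`C_{i+1} = [C_i, C_{i+1}] D_{i+1}` gives `C_{i+1} ≤ D_{i+1} F_k`. Finally `C_n ≤ D_n F_1 = F_1 ≤ F(G)`.
-/

section

variable {H : Type*} [Group H]

theorem Subgroup.mem_of_pow_mem_of_coprime {K : Subgroup H} {z : H} {s t : ℕ}
    (hst : s.Coprime t) (hs : z ^ s ∈ K) (ht : z ^ t ∈ K) : z ∈ K := by
  have hz : z = (z ^ s) ^ Nat.gcdA s t * (z ^ t) ^ Nat.gcdB s t := by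
    rw [← zpow_natCast z s, ← zpow_natCast z t, ← zpow_mul, ← zpow_mul, ← zpow_add,
      ← Nat.gcd_eq_gcd_ab, hst, Nat.cast_one, zpow_one]
  rw [hz]
  exact mul_mem (K.zpow_mem hs _) (K.zpow_mem ht _)

theorem Subgroup.mem_of_mul_inv_mem_of_pow_mem {W : Subgroup H} {x w : H} {s : ℕ}
    (hx : x ∈ normalizer (W : Set H)) (hxw : x * w⁻¹ ∈ W) (hxs : x ^ s ∈ W)
    (hw : (orderOf w).Coprime s) : w ∈ W := by
  have hpow : ∀ j : ℕ, x ^ j * (w ^ j)⁻¹ ∈ W := by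
    intro j
    induction j with
    | zero => simp
    | succ j ih =>
      have hconj := (mem_normalizer_iff.mp hx _).mp ih
      convert mul_mem hconj hxw using 1
      group
  have hws : w ^ s ∈ W := by
    simpa using mul_mem (inv_mem hxs) (hpow s)
  refine mem_of_pow_mem_of_coprime hw ?_ hws
  rw [pow_orderOf_eq_one]
  exact one_mem W

theorem IsOfFinOrder.exists_pPart_mul_pCompl {p : ℕ} (hp : p.Prime) {g : H} (hg : IsOfFinOrder g) :
    ∃ u ∈ zpowers g, ∃ w ∈ zpowers g, g = u * w ∧ (∃ k, u ^ p ^ k = 1) ∧ (orderOf w).Coprime p := by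
  obtain ⟨k, r, hpr, hkr⟩ := Nat.exists_eq_pow_mul_and_not_dvd hg.orderOf_pos.ne' p hp.ne_one
  have hpr' : p.Coprime r := hp.coprime_iff_not_dvd.mpr hpr
  set a := Nat.gcdA (p ^ k) r
  set b := Nat.gcdB (p ^ k) r
  have hbez : ((p ^ k : ℕ) : ℤ) * a + (r : ℤ) * b = 1 := by
    rw [← Nat.gcd_eq_gcd_ab, hpr'.pow_left k, Nat.cast_one]
  have hord : ∀ z : ℤ, g ^ ((orderOf g : ℤ) * z) = 1 := fun z => by
    rw [zpow_mul, zpow_natCast, pow_orderOf_eq_one, one_zpow]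
  refine ⟨g ^ ((r : ℤ) * b), zpow_mem_zpowers _ _, g ^ (((p ^ k : ℕ) : ℤ) * a),
    zpow_mem_zpowers _ _, ?_, ⟨k, ?_⟩, ?_⟩
  · rw [← zpow_add, add_comm, hbez, zpow_one]
  · rw [← zpow_natCast, ← zpow_mul]
    convert hord b using 2
    push_cast [hkr]
    ring
  · have hw : (g ^ (((p ^ k : ℕ) : ℤ) * a)) ^ r = 1 := by
      rw [← zpow_natCast, ← zpow_mul]
      convert hord a using 2
      push_cast [hkr]
      ring
    exact Nat.Coprime.coprime_dvd_left (orderOf_dvd_of_pow_eq_one hw) hpr'.symm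

theorem Subgroup.coprime_card_sup {p : ℕ} {K L : Subgroup H} [L.Normal]
    (hK : (Nat.card K).Coprime p) (hL : (Nat.card L).Coprime p) :
    (Nat.card ↥(K ⊔ L)).Coprime p := by
  have hcard : Nat.card ↥(K ⊔ L) = Nat.card L * L.relIndex K := by
    rw [← relIndex_sup_right K L, ← relIndex_bot_left, ← relIndex_bot_left,
      relIndex_mul_relIndex _ _ _ bot_le le_sup_right]
  rw [hcard]
  exact Nat.Coprime.mul_left hL (hK.coprime_dvd_left (relIndex_dvd_card L K))

def pCore (p : ℕ) (H : Type*) [Group H] : Subgroup H :=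
  sSup {K : Subgroup H | K.Normal ∧ IsPGroup p K}

instance pCore_normal (p : ℕ) : (pCore p H).Normal :=
  sSup_normal _ fun _ hK => hK.1

theorem isPGroup_pCore (p : ℕ) : IsPGroup p (pCore p H) :=
  Sylow.sSup_of_normal _ (fun _ hK => hK.2) (fun _ hK => hK.1)

theorem le_pCore {p : ℕ} {K : Subgroup H} [K.Normal] (hK : IsPGroup p K) : K ≤ pCore p H :=
  le_sSup ⟨‹_›, hK⟩

instance fittingSubgroup_normal_s13 : (FittingSubgroup H).Normal :=
  sSup_normal _ fun _ hN => hN.1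

theorem map_fittingSubgroup_le {H' : Type*} [Group H'] {f : H →* H'}
    (hf : Function.Surjective f) : (FittingSubgroup H).map f ≤ FittingSubgroup H' := by
  rw [FittingSubgroup, (gc_map_comap f).l_sSup]
  refine iSup₂_le fun N ⟨hN, hNnil⟩ => le_sSup ⟨hN.map f hf, ?_⟩
  exact Group.nilpotent_of_surjective (f.subgroupMap N) (f.subgroupMap_surjective N)

theorem coprime_relIndex_pCore [Finite H] {p : ℕ} [Fact p.Prime] {N : Subgroup H} [N.Normal]
    [Group.IsNilpotent N] : ((pCore p H).relIndex N).Coprime p := by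
  let P : Sylow p N := default
  have : (P.map N.subtype).Normal := by
    have := Sylow.characteristic_of_normal P inferInstance
    infer_instance
  have hP : P ≤ (pCore p H).subgroupOf N := by
    rw [subgroupOf, ← map_le_iff_le_comap]
    exact le_pCore (P.isPGroup'.map N.subtype)
  exact Nat.Coprime.coprime_dvd_left (index_dvd_of_le hP)
    (Nat.coprime_comm.mp ((Fact.out : p.Prime).coprime_iff_not_dvd.mpr P.not_dvd_index))

theorem coprime_card_map_fittingSubgroup [Finite H] {p : ℕ} [Fact p.Prime] :
    (Nat.card ((FittingSubgroup H).map (QuotientGroup.mk' (pCore p H)))).Coprime p := by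
  set π := QuotientGroup.mk' (pCore p H)
  let T : Set (Subgroup (H ⧸ pCore p H)) := {K | K.Normal ∧ (Nat.card K).Coprime p}
  have hT : SupClosed T := fun K hK L hL => by
    have := hK.1
    have := hL.1
    exact ⟨inferInstance, coprime_card_sup hK.2 hL.2⟩
  have hmap : (FittingSubgroup H).map π = sSup (map π '' {N | N.Normal ∧ Group.IsNilpotent ↥N}) := by
    rw [FittingSubgroup, (gc_map_comap π).l_sSup, sSup_image]
  rw [hmap]
  refine (hT.sSup_mem (Set.toFinite _) ⟨inferInstance, by simp⟩ ?_).2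
  rintro _ ⟨N, ⟨hN, hNnil⟩, rfl⟩
  refine ⟨hN.map π (QuotientGroup.mk'_surjective _), ?_⟩
  rw [← relIndex_ker, QuotientGroup.ker_mk']
  exact coprime_relIndex_pCore

theorem mem_pCore_of_mem_fittingSubgroup [Finite H] {p : ℕ} [Fact p.Prime] {u : H} {k : ℕ}
    (hu : u ∈ FittingSubgroup H) (hpu : u ^ p ^ k = 1) : u ∈ pCore p H := by
  set π := QuotientGroup.mk' (pCore p H)
  have h1 : orderOf (π u) ∣ Nat.card ((FittingSubgroup H).map π) :=
    orderOf_dvd_natCard _ (mem_map_of_mem π hu)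
  have h2 : orderOf (π u) ∣ p ^ k := orderOf_dvd_of_pow_eq_one (by rw [← map_pow, hpu, map_one])
  have h3 : orderOf (π u) = 1 :=
    Nat.Coprime.eq_one_of_dvd
      (Nat.Coprime.coprime_dvd_left h1 (coprime_card_map_fittingSubgroup.pow_right k)) h2
  rw [← QuotientGroup.ker_mk' (pCore p H), MonoidHom.mem_ker]
  exact orderOf_eq_one_iff.mp h3

def sectionCentralizer (c' d' : Subgroup H) : Subgroup H where
  carrier := {m | m ∈ normalizer (d' : Set H) ∧ ∀ y ∈ c', ⁅m, y⁆ ∈ d'}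
  one_mem' := ⟨one_mem _, fun y _ => by simp [one_mem]⟩
  mul_mem' := by
    rintro a b ⟨ha, ha'⟩ ⟨hb, hb'⟩
    refine ⟨mul_mem ha hb, fun y hy => ?_⟩
    have hab : ⁅a * b, y⁆ = (a * ⁅b, y⁆ * a⁻¹) * ⁅a, y⁆ := by
      simp only [commutatorElement_def]; group
    rw [hab]
    exact mul_mem ((mem_normalizer_iff.mp ha _).mp (hb' y hy)) (ha' y hy)
  inv_mem' := by
    rintro a ⟨ha, ha'⟩
    refine ⟨inv_mem ha, fun y hy => ?_⟩
    have hinv : ⁅a⁻¹, y⁆ = a⁻¹ * ⁅a, y⁆⁻¹ * a := by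
      simp only [commutatorElement_def]; group
    rw [hinv]
    exact (mem_normalizer_iff''.mp ha _).mp (inv_mem (ha' y hy))

theorem le_normalizer_sectionCentralizer (c' d' : Subgroup H) :
    normalizer (c' : Set H) ⊓ normalizer (d' : Set H) ≤
      normalizer (sectionCentralizer c' d' : Set H) := by
  refine le_normalizer_iff.mpr fun g ⟨hgc, hgd⟩ m ⟨hm, hm'⟩ => ⟨?_, fun y hy => ?_⟩
  · exact mul_mem (mul_mem hgd hm) (inv_mem hgd)
  · have hconj : ⁅g * m * g⁻¹, y⁆ = g * ⁅m, g⁻¹ * y * g⁆ * g⁻¹ := by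
      simp only [commutatorElement_def]; group
    rw [hconj]
    exact (mem_normalizer_iff.mp hgd _).mp (hm' _ ((mem_normalizer_iff''.mp hgc y).mp hy))

theorem mem_sectionCentralizer_of_isPGroup {p q : ℕ} (hpq : p.Coprime q) {c' d' U : Subgroup H}
    [U.Normal] (hU : IsPGroup p U) (hq : ∀ y ∈ c', ∃ m, y ^ q ^ m ∈ d') {u : H} (hu : u ∈ U)
    (hu' : u ∈ normalizer (c' : Set H) ⊓ normalizer (d' : Set H)) :
    u ∈ sectionCentralizer c' d' := by
  refine ⟨hu'.2, fun y hy => ?_⟩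
  have hU' : ⁅u, y⁆ ∈ U := by
    rw [commutatorElement_def, mul_assoc, mul_assoc, ← mul_assoc y]
    exact mul_mem hu (Normal.conj_mem ‹_› _ (inv_mem hu) y)
  have hc' : ⁅u, y⁆ ∈ c' := by
    rw [commutatorElement_def]
    exact mul_mem ((mem_normalizer_iff.mp hu'.1 y).mp hy) (inv_mem hy)
  obtain ⟨k, hk⟩ := hU ⟨_, hU'⟩
  obtain ⟨m, hm⟩ := hq _ hc'
  refine mem_of_pow_mem_of_coprime (hpq.pow k m) ?_ hm
  rw [show ⁅u, y⁆ ^ p ^ k = 1 from congrArg Subtype.val hk]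
  exact one_mem d'

end

/-- Consecutive sections `c/d` and `c'/d'` of an `𝓕`-chain, for the primes `p` and `q`. -/
structure FChainLink {H : Type*} [Group H] (p q : ℕ) (c d c' d' : Subgroup H) : Prop where
  prime_left : p.Prime
  prime_right : q.Prime
  ne : p ≠ q
  le : d ≤ c
  le_normalizer : c ≤ normalizer (c' : Set H) ⊓ normalizer (d' : Set H)
  commutatorElement_mem : ∀ x ∈ d, ∀ y ∈ c', ⁅x, y⁆ ∈ d'
  le_commutator_sup : c' ≤ ⁅c, c'⁆ ⊔ d'
  exists_pow_mem_left : ∀ x ∈ c, ∃ m, x ^ p ^ m ∈ d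
  exists_pow_mem_right : ∀ y ∈ c', ∃ m, y ^ q ^ m ∈ d'

namespace FChainLink

variable {H : Type*} [Group H] {p q : ℕ} {c d c' d' : Subgroup H}

theorem le_sectionCentralizer (h : FChainLink p q c d c' d') : d ≤ sectionCentralizer c' d' :=
  fun x hx => ⟨(h.le_normalizer (h.le hx)).2, h.commutatorElement_mem x hx⟩

theorem le_of_le_sup_fittingSubgroup [Finite H] (h : FChainLink p q c d c' d')
    (hc : c ≤ d ⊔ FittingSubgroup H) : c' ≤ d' := by
  have := Fact.mk h.prime_left
  set W := sectionCentralizer c' d'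
  suffices hcW : c ≤ W by
    refine h.le_commutator_sup.trans (sup_le ?_ le_rfl)
    exact commutator_le.mpr fun x hx y hy => (hcW hx).2 y hy
  intro x hx
  obtain ⟨e, he, f, hf, rfl⟩ := mem_sup_of_normal_right.mp (hc hx)
  have hfM : f ∈ normalizer (c' : Set H) ⊓ normalizer (d' : Set H) := by
    simpa using mul_mem (inv_mem (h.le_normalizer (h.le he))) (h.le_normalizer hx)
  obtain ⟨u, hu, w, -, rfl, ⟨k, hk⟩, hwp⟩ :=
    (isOfFinOrder_of_finite f).exists_pPart_mul_pCompl h.prime_left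
  have heW : e ∈ W := h.le_sectionCentralizer he
  have huW : u ∈ W :=
    mem_sectionCentralizer_of_isPGroup ((Nat.coprime_primes h.prime_left h.prime_right).mpr h.ne)
      (isPGroup_pCore p) h.exists_pow_mem_right
      (mem_pCore_of_mem_fittingSubgroup (zpowers_le.mpr hf hu) hk) (zpowers_le.mpr hfM hu)
  obtain ⟨m, hm⟩ := h.exists_pow_mem_left _ hx
  have hwW : w ∈ W := by
    refine mem_of_mul_inv_mem_of_pow_mem
      (le_normalizer_sectionCentralizer c' d' (h.le_normalizer hx)) ?_
      (h.le_sectionCentralizer hm) (hwp.pow_right m)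
    simpa [mul_assoc] using mul_mem heW huW
  exact mul_mem heW (mul_mem huW hwW)

theorem map {H' : Type*} [Group H'] (h : FChainLink p q c d c' d') (f : H →* H') :
    FChainLink p q (c.map f) (d.map f) (c'.map f) (d'.map f) where
  prime_left := h.prime_left
  prime_right := h.prime_right
  ne := h.ne
  le := map_mono h.le
  le_normalizer := le_inf
    ((map_mono (h.le_normalizer.trans inf_le_left)).trans (le_normalizer_map f))
    ((map_mono (h.le_normalizer.trans inf_le_right)).trans (le_normalizer_map f))
  commutatorElement_mem := by
    rintro _ ⟨x, hx, rfl⟩ _ ⟨y, hy, rfl⟩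
    rw [← map_commutatorElement]
    exact mem_map_of_mem f (h.commutatorElement_mem x hx y hy)
  le_commutator_sup := by
    rw [← map_commutator, ← Subgroup.map_sup]
    exact map_mono h.le_commutator_sup
  exists_pow_mem_left := by
    rintro _ ⟨x, hx, rfl⟩
    obtain ⟨m, hm⟩ := h.exists_pow_mem_left x hx
    exact ⟨m, by rw [← map_pow]; exact mem_map_of_mem f hm⟩
  exists_pow_mem_right := by
    rintro _ ⟨y, hy, rfl⟩
    obtain ⟨m, hm⟩ := h.exists_pow_mem_right y hy
    exact ⟨m, by rw [← map_pow]; exact mem_map_of_mem f hm⟩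

theorem le_sup_of_le_sup_fittingSeries [Finite H] (h : FChainLink p q c d c' d') {k : ℕ}
    (hc : c ≤ d ⊔ FittingSeries H (k + 1)) : c' ≤ d' ⊔ FittingSeries H k := by
  set π := QuotientGroup.mk' (FittingSeries H k).normalCore
  have hπc : c.map π ≤ d.map π ⊔ FittingSubgroup (H ⧸ (FittingSeries H k).normalCore) := by
    calc c.map π ≤ (d ⊔ FittingSeries H (k + 1)).map π := map_mono hc
      _ = d.map π ⊔ FittingSubgroup _ := by
        rw [Subgroup.map_sup, FittingSeries, map_comap_eq_self_of_surjective (QuotientGroup.mk'_surjective _)]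
  calc c' ≤ (c'.map π).comap π := le_comap_map π c'
    _ ≤ (d'.map π).comap π := comap_mono ((h.map π).le_of_le_sup_fittingSubgroup hπc)
    _ = d' ⊔ (FittingSeries H k).normalCore := by rw [comap_map_eq, QuotientGroup.ker_mk']
    _ ≤ d' ⊔ FittingSeries H k := sup_le_sup_left (normalCore_le _) d'

end FChainLink

theorem comap_fittingSubgroup_le {G G' : Type*} [Group G] [Group G'] {f : G →* G'}
    (hf : Function.Bijective f) : (FittingSubgroup G').comap f ≤ FittingSubgroup G :=
  (comap_equiv_eq_map_symm (MulEquiv.ofBijective f hf) _).trans_le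
    (map_fittingSubgroup_le (MulEquiv.ofBijective f hf).symm.surjective)

theorem fittingSeries_one_le (G : Type*) [Group G] : FittingSeries G 1 ≤ FittingSubgroup G := by
  have hbot : (FittingSeries G 0).normalCore = ⊥ := le_bot_iff.mp (normalCore_le _)
  refine comap_fittingSubgroup_le ⟨?_, QuotientGroup.mk'_surjective _⟩
  rw [← MonoidHom.ker_eq_bot_iff, QuotientGroup.ker_mk', hbot]

theorem fittingSeries_fittingLength {G : Type*} [Group G] (h : 0 < fittingLength G) :
    FittingSeries G (fittingLength G) = ⊤ :=
  Nat.sInf_mem (Nat.nonempty_of_pos_sInf h)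

theorem exists_pow_mem_of_isPGroup_quotient {G : Type*} [Group G] {p : ℕ} {C D : Subgroup G}
    [(D.subgroupOf C).Normal] (hCD : IsPGroup p (C ⧸ D.subgroupOf C)) {x : G} (hx : x ∈ C) :
    ∃ m, x ^ p ^ m ∈ D := by
  obtain ⟨m, hm⟩ := hCD (QuotientGroup.mk ⟨x, hx⟩)
  rw [← QuotientGroup.mk_pow, QuotientGroup.eq_one_iff, mem_subgroupOf] at hm
  exact ⟨m, by simpa using hm⟩

namespace IsFChain

variable {G : Type*} [Group G] {ℓ : ℕ} {p : Fin ℓ → ℕ} {C D : Fin ℓ → Subgroup G}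

theorem exists_pow_mem (h : IsFChain G ℓ p C D) (i : Fin ℓ) {x : G} (hx : x ∈ C i) :
    ∃ m, x ^ p i ^ m ∈ D i :=
  have := h.normal i
  exists_pow_mem_of_isPGroup_quotient (h.pgroup i) hx

theorem link (h : IsFChain G ℓ p C D) (i : Fin ℓ) (hi : i.1 + 1 < ℓ) :
    FChainLink (p i) (p ⟨i.1 + 1, hi⟩) (C i) (D i) (C ⟨i.1 + 1, hi⟩) (D ⟨i.1 + 1, hi⟩) where
  prime_left := h.prime i
  prime_right := h.prime _
  ne := h.p_ne i hi
  le := h.le i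
  le_normalizer := le_inf (h.norm_next i hi).1 (h.norm_next i hi).2
  commutatorElement_mem := h.cent_next i hi
  le_commutator_sup := (h.comm_next i hi).ge
  exists_pow_mem_left _ := h.exists_pow_mem i
  exists_pow_mem_right _ := h.exists_pow_mem _

theorem le_sup_fittingSeries [Finite G] (h : IsFChain G ℓ p C D) (htop : FittingSeries G ℓ = ⊤) :
    ∀ j (hj : j < ℓ), C ⟨j, hj⟩ ≤ D ⟨j, hj⟩ ⊔ FittingSeries G (ℓ - j) := by
  intro j
  induction j with
  | zero =>
    intro hj
    rw [Nat.sub_zero, htop, sup_top_eq]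
    exact le_top
  | succ j ih =>
    intro hj
    refine (h.link ⟨j, by omega⟩ hj).le_sup_of_le_sup_fittingSeries ?_
    rw [show ℓ - (j + 1) + 1 = ℓ - j by omega]
    exact ih (by omega)

end IsFChain

/-- If `G` has an `𝓕`-chain of length `n = f(G)` (with `D_n = 1`, as required by the
definition), then its last term `C_n` is contained in the Fitting subgroup. -/
theorem last_term_of_maximal_fchain_le_fitting
    (G : Type*) [Group G] [Finite G] {n : ℕ} (hn : 0 < n)
    (p : Fin n → ℕ) (C D : Fin n → Subgroup G) (hchain : IsFChain G n p C D)
    (hf : fittingLength G = n) :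
    C ⟨n - 1, by omega⟩ ≤ FittingSubgroup G := by
  have htop : FittingSeries G n = ⊤ := hf ▸ fittingSeries_fittingLength (hf ▸ hn)
  have hlast := hchain.le_sup_fittingSeries htop (n - 1) (by omega)
  rw [hchain.d_last hn, bot_sup_eq, show n - (n - 1) = 1 by omega] at hlast
  exact hlast.trans (fittingSeries_one_le G)
end
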